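/- arXiv:1809.01527 — 3 statements merged into one kernel-verified Lean document; each statement's English description precedes it below -/
import Mathlib

section
/- Let u : ℤ → ℂ be finitely supported, and for j ∈ ℤ define F_j(u) := Σ_{(j₁,j₂,j₃,j₄,j₅)∈R(j)} u_{j₁}·conj(u_{j₂})·u_{j₃}·conj(u_{j₄})·u_{j₅}, where R(j) = {(j₁,…,j₅) ∈ ℤ⁵ : j₁−j₂+j₃−j₄+j₅ = j and j₁²−j₂²+j₃²−j₄²+j₅² = j²}. Then Σ_{j∈ℤ} Im(conj(u_j)·F_j(u)) = 0. -/
/-! Writing the bracket as one sum over resonant tuples `(j, j₁, …, j₅)` of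
`conj u_j · u_{j₁} · conj u_{j₂} · u_{j₃} · conj u_{j₄} · u_{j₅}`, the swap
`(j, j₁, j₂, j₃, j₄, j₅) ↦ (j₁, j, j₃, j₂, j₅, j₄)` of conjugated and unconjugated indices
preserves both resonance conditions and conjugates each summand. For finitely supported `u` the
sum is finite, hence equal to its own conjugate, so its imaginary part vanishes. -/

open scoped ComplexConjugate

theorem Complex.im_tsum_eq_zero_of_conj_perm {X : Type*} (f : X → ℂ) (e : Equiv.Perm X)
    (h : ∀ x, f (e x) = conj (f x)) : (∑' x, f x).im = 0 := by
  refine Complex.conj_eq_iff_im.mp ?_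
  rw [Complex.conj_tsum]
  simp only [← h]
  exact e.tsum_eq f

theorem Summable.tsum_tsum_subtype_eq {α β E : Type*} [AddCommGroup E] [UniformSpace E]
    [IsUniformAddGroup E] [CompleteSpace E] [T0Space E] {p : α → β → Prop} {g : α × β → E}
    (hg : Summable fun w : {w : α × β // p w.1 w.2} => g w) :
    ∑' a, ∑' b : {b // p a b}, g (a, b) = ∑' w : {w : α × β // p w.1 w.2}, g w := by
  let e := Equiv.subtypeProdEquivSigmaSubtype p
  rw [← e.symm.tsum_eq]
  exact (((e.symm.summable_iff).mpr hg).tsum_sigma).symm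

namespace QuinticResonant

abbrev Quintuple := ℤ × ℤ × ℤ × ℤ × ℤ

def IsResonant (j : ℤ) (v : Quintuple) : Prop :=
  v.1 - v.2.1 + v.2.2.1 - v.2.2.2.1 + v.2.2.2.2 = j ∧
    v.1 ^ 2 - v.2.1 ^ 2 + v.2.2.1 ^ 2 - v.2.2.2.1 ^ 2 + v.2.2.2.2 ^ 2 = j ^ 2

def monomial (u : ℤ → ℂ) (v : Quintuple) : ℂ :=
  u v.1 * conj (u v.2.1) * u v.2.2.1 * conj (u v.2.2.2.1) * u v.2.2.2.2

def bracketTerm (u : ℤ → ℂ) (w : ℤ × Quintuple) : ℂ :=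
  conj (u w.1) * monomial u w.2

def conjSwap : ℤ × Quintuple → ℤ × Quintuple
  | (j, a, b, c, d, f) => (a, j, c, b, f, d)

theorem conjSwap_involutive : Function.Involutive conjSwap := fun _ => rfl

theorem isResonant_conjSwap_iff (w : ℤ × Quintuple) :
    IsResonant (conjSwap w).1 (conjSwap w).2 ↔ IsResonant w.1 w.2 := by
  obtain ⟨j, a, b, c, d, f⟩ := w
  simp only [IsResonant, conjSwap]
  constructor <;> rintro ⟨h₁, h₂⟩ <;> constructor <;> linarith

theorem bracketTerm_conjSwap (u : ℤ → ℂ) (w : ℤ × Quintuple) :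
    bracketTerm u (conjSwap w) = conj (bracketTerm u w) := by
  obtain ⟨j, a, b, c, d, f⟩ := w
  simp only [bracketTerm, monomial, conjSwap, map_mul, Complex.conj_conj]
  ring

def resonantConjSwap : Equiv.Perm {w : ℤ × Quintuple // IsResonant w.1 w.2} :=
  conjSwap_involutive.toPerm.subtypeEquiv fun w => (isResonant_conjSwap_iff w).symm

theorem finite_support_bracketTerm {u : ℤ → ℂ} (hu : (Function.support u).Finite) :
    (Function.support (bracketTerm u)).Finite := by
  refine (hu.prod (hu.prod (hu.prod (hu.prod (hu.prod hu))))).subset ?_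
  rintro ⟨j, a, b, c, d, f⟩ hw
  simp only [Function.mem_support, bracketTerm, monomial, ne_eq, mul_eq_zero, map_eq_zero,
    not_or] at hw
  simp only [Set.mem_prod, Function.mem_support]
  tauto

theorem tsum_im_conj_mul_tsum_monomial_eq_zero {u : ℤ → ℂ} (hu : (Function.support u).Finite) :
    ∑' j : ℤ, (conj (u j) * ∑' v : {v // IsResonant j v}, monomial u v).im = 0 := by
  have hfin := finite_support_bracketTerm hu
  have houter : Summable fun j : ℤ => conj (u j) * ∑' v : {v // IsResonant j v}, monomial u v :=
    summable_of_hasFiniteSupport <| hu.subset fun j hj h => hj (by simp [h])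
  have hresonant : Summable fun w : {w : ℤ × Quintuple // IsResonant w.1 w.2} => bracketTerm u w :=
    summable_of_hasFiniteSupport <| hfin.preimage Subtype.val_injective.injOn
  calc ∑' j : ℤ, (conj (u j) * ∑' v : {v // IsResonant j v}, monomial u v).im
      = (∑' j : ℤ, ∑' v : {v // IsResonant j v}, bracketTerm u (j, v)).im := by
        simp only [bracketTerm, tsum_mul_left, Complex.im_tsum houter]
    _ = (∑' w : {w : ℤ × Quintuple // IsResonant w.1 w.2}, bracketTerm u w).im := by
        rw [hresonant.tsum_tsum_subtype_eq]
    _ = 0 := Complex.im_tsum_eq_zero_of_conj_perm _ resonantConjSwap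
        fun w => bracketTerm_conjSwap u w

end QuinticResonant

/-- Mass conservation for the quintic resonant system:
`∑_j Im(conj(u_j) · F_j(u)) = 0`. -/
theorem quintic_resonant_mass_bracket (u : ℤ → ℂ) (hu : (Function.support u).Finite) :
    ∑' j : ℤ,
      (conj (u j) *
        ∑' v : {v : ℤ × ℤ × ℤ × ℤ × ℤ //
            v.1 - v.2.1 + v.2.2.1 - v.2.2.2.1 + v.2.2.2.2 = j ∧
            v.1 ^ 2 - v.2.1 ^ 2 + v.2.2.1 ^ 2 - v.2.2.2.1 ^ 2 + v.2.2.2.2 ^ 2 = j ^ 2},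
          u v.val.1 * conj (u v.val.2.1) * u v.val.2.2.1 *
            conj (u v.val.2.2.2.1) * u v.val.2.2.2.2).im = 0 :=
  QuinticResonant.tsum_im_conj_mul_tsum_monomial_eq_zero hu
end

section
/- There exists a constant C > 0 such that for every finitely supported u : ℤ → ℂ, (Σ_{j∈ℤ} ⟨j⟩² |F_j(u)|²)^{1/2} ≤ C (Σ_j ⟨j⟩²|u_j|²)^{5/2}, where F_j(u) = Σ_{(j₁,…,j₅): j₁−j₂+j₃−j₄+j₅=j, j₁²−j₂²+j₃²−j₄²+j₅²=j²} u_{j₁} conj(u_{j₂}) u_{j₃} conj(u_{j₄}) u_{j₅}. -/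
open scoped ComplexConjugate

/-!
Dropping the resonance condition only enlarges `|F_j(u)|`, so it suffices to bound the full
quintic convolution of `a = |u|`. Cauchy–Schwarz on each fibre `j₁ - j₂ + j₃ - j₄ + j₅ = j`, with
weights `∏ ⟨j_i⟩⁻²` and `∏ ⟨j_i⟩² a_{j_i}²`, reduces the estimate to the uniform bound
`⟨j⟩² ∑_{fibre} ∏ ⟨j_i⟩⁻² ≤ 25 K⁴` with `K = ∑_m ⟨m⟩⁻²`. That bound comes from
`⟨j⟩² ≤ 5 ∑_i ⟨j_i⟩²`: each term cancels one factor `⟨j_i⟩⁻²`, and the other four coordinates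
determine the point of the fibre, so each of the five resulting sums is at most `K⁴`. Summing over
all fibres gives back `‖u‖_{h¹}¹⁰`, hence `C = 5 K²`.
-/

open Finset

namespace QuinticEstimate

local notation "ℤ⁴" => ℤ × ℤ × ℤ × ℤ
local notation "ℤ⁵" => ℤ × ℤ × ℤ × ℤ × ℤ

/-- `⟨m⟩²` in the Japanese-bracket notation `⟨m⟩ = (1 + m²)^{1/2}`. -/
def bracketSq (m : ℤ) : ℝ := 1 + (m : ℝ) ^ 2

lemma bracketSq_pos (m : ℤ) : 0 < bracketSq m := by unfold bracketSq; positivity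

lemma inv_bracketSq_pos (m : ℤ) : 0 < (bracketSq m)⁻¹ := inv_pos.mpr (bracketSq_pos m)

lemma summable_bracketSq_inv : Summable fun m : ℤ => (bracketSq m)⁻¹ := by
  refine .of_norm_bounded_eventually (Real.summable_one_div_int_pow.mpr one_lt_two) ?_
  filter_upwards [Filter.eventually_cofinite_ne 0] with m hm
  have hm2 : (0 : ℝ) < (m : ℝ) ^ 2 := by positivity
  rw [norm_inv, Real.norm_of_nonneg (bracketSq_pos m).le, one_div]
  exact inv_anti₀ hm2 (by unfold bracketSq; linarith)

def altSum (v : ℤ⁵) : ℤ := v.1 - v.2.1 + v.2.2.1 - v.2.2.2.1 + v.2.2.2.2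

def altSumFiber (S : Finset ℤ) (j : ℤ) : Finset ℤ⁵ :=
  {v ∈ S ×ˢ S ×ˢ S ×ˢ S ×ˢ S | altSum v = j}

lemma mem_altSumFiber {S : Finset ℤ} {j : ℤ} {v : ℤ⁵} :
    v ∈ altSumFiber S j ↔ v ∈ S ×ˢ S ×ˢ S ×ˢ S ×ˢ S ∧ altSum v = j :=
  mem_filter

lemma altSumFiber_eq_empty {S : Finset ℤ} {j : ℤ}
    (hj : j ∉ (S ×ˢ S ×ˢ S ×ˢ S ×ˢ S).image altSum) : altSumFiber S j = ∅ :=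
  filter_eq_empty_iff.mpr fun _ hv h => hj (h ▸ mem_image_of_mem altSum hv)

def prod4 (c : ℤ → ℝ) (k : ℤ⁴) : ℝ := c k.1 * c k.2.1 * c k.2.2.1 * c k.2.2.2

def prod5 (c : ℤ → ℝ) (v : ℤ⁵) : ℝ :=
  c v.1 * c v.2.1 * c v.2.2.1 * c v.2.2.2.1 * c v.2.2.2.2

lemma prod4_nonneg {c : ℤ → ℝ} (hc : ∀ m, 0 ≤ c m) (k : ℤ⁴) : 0 ≤ prod4 c k := by
  unfold prod4
  have := hc k.1; have := hc k.2.1; have := hc k.2.2.1; have := hc k.2.2.2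
  positivity

lemma prod5_nonneg {c : ℤ → ℝ} (hc : ∀ m, 0 ≤ c m) (v : ℤ⁵) : 0 ≤ prod5 c v := by
  unfold prod5
  have := hc v.1; have := hc v.2.1; have := hc v.2.2.1; have := hc v.2.2.2.1; have := hc v.2.2.2.2
  positivity

lemma sum_prod4 (S : Finset ℤ) (c : ℤ → ℝ) :
    ∑ k ∈ S ×ˢ S ×ˢ S ×ˢ S, prod4 c k = (∑ m ∈ S, c m) ^ 4 := by
  simp only [prod4, sum_product, ← sum_mul, ← mul_sum]
  ring

lemma sum_prod5 (S : Finset ℤ) (c : ℤ → ℝ) :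
    ∑ v ∈ S ×ˢ S ×ˢ S ×ˢ S ×ˢ S, prod5 c v = (∑ m ∈ S, c m) ^ 5 := by
  simp only [prod5, sum_product, ← sum_mul, ← mul_sum]
  ring

def dropCoord : Fin 5 → ℤ⁵ → ℤ⁴
  | 0, (_, b, c, d, e) => (b, c, d, e)
  | 1, (a, _, c, d, e) => (a, c, d, e)
  | 2, (a, b, _, d, e) => (a, b, d, e)
  | 3, (a, b, c, _, e) => (a, b, c, e)
  | 4, (a, b, c, d, _) => (a, b, c, d)

lemma sum_altSumFiber_prod4_dropCoord_le (S : Finset ℤ) (j : ℤ) {f : ℤ → ℝ}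
    (hf : ∀ m, 0 ≤ f m) (i : Fin 5) :
    ∑ v ∈ altSumFiber S j, prod4 f (dropCoord i v) ≤ (∑ m ∈ S, f m) ^ 4 := by
  have hinj : Set.InjOn (dropCoord i) (altSumFiber S j) := by
    rintro ⟨a, b, c, d, e⟩ hv ⟨a', b', c', d', e'⟩ hw h
    simp only [mem_coe, mem_altSumFiber, altSum] at hv hw
    fin_cases i <;> simp only [dropCoord, Prod.mk.injEq] at h ⊢ <;> omega
  have hmaps : ∀ v ∈ altSumFiber S j, dropCoord i v ∈ S ×ˢ S ×ˢ S ×ˢ S := by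
    rintro ⟨a, b, c, d, e⟩ hv
    simp only [mem_altSumFiber, mem_product] at hv
    fin_cases i <;> simp [dropCoord, mem_product, hv]
  rw [← sum_prod4, ← sum_image hinj]
  exact sum_le_sum_of_subset_of_nonneg (image_subset_iff.mpr hmaps) fun k _ _ => prod4_nonneg hf k

lemma bracketSq_altSum_le (v : ℤ⁵) :
    bracketSq (altSum v) ≤
      5 * (bracketSq v.1 + bracketSq v.2.1 + bracketSq v.2.2.1 + bracketSq v.2.2.2.1 +
        bracketSq v.2.2.2.2) := by
  obtain ⟨a, b, c, d, e⟩ := v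
  simp only [bracketSq, altSum]
  push_cast
  nlinarith [sq_nonneg ((a : ℝ) + b), sq_nonneg ((a : ℝ) - c), sq_nonneg ((a : ℝ) + d),
    sq_nonneg ((a : ℝ) - e), sq_nonneg ((b : ℝ) + c), sq_nonneg ((b : ℝ) - d),
    sq_nonneg ((b : ℝ) + e), sq_nonneg ((c : ℝ) + d), sq_nonneg ((c : ℝ) - e),
    sq_nonneg ((d : ℝ) + e)]

lemma sum_prod4_inv_dropCoord (v : ℤ⁵) :
    ∑ i, prod4 (fun m => (bracketSq m)⁻¹) (dropCoord i v) =
      (bracketSq v.1 + bracketSq v.2.1 + bracketSq v.2.2.1 + bracketSq v.2.2.2.1 +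
        bracketSq v.2.2.2.2) * prod5 (fun m => (bracketSq m)⁻¹) v := by
  obtain ⟨a, b, c, d, e⟩ := v
  have := bracketSq_pos a; have := bracketSq_pos b; have := bracketSq_pos c
  have := bracketSq_pos d; have := bracketSq_pos e
  simp only [Fin.sum_univ_five, dropCoord, prod4, prod5]
  field_simp

lemma bracketSq_mul_sum_altSumFiber_prod5_inv_le (S : Finset ℤ) (j : ℤ) :
    bracketSq j * ∑ v ∈ altSumFiber S j, prod5 (fun m => (bracketSq m)⁻¹) v ≤
      25 * (∑ m ∈ S, (bracketSq m)⁻¹) ^ 4 := by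
  set c : ℤ → ℝ := fun m => (bracketSq m)⁻¹
  have hc : ∀ m, 0 ≤ c m := fun m => (inv_bracketSq_pos m).le
  calc bracketSq j * ∑ v ∈ altSumFiber S j, prod5 c v
      = ∑ v ∈ altSumFiber S j, bracketSq (altSum v) * prod5 c v := by
        rw [mul_sum]
        exact sum_congr rfl fun v hv => by rw [(mem_altSumFiber.mp hv).2]
    _ ≤ ∑ v ∈ altSumFiber S j, 5 * ∑ i, prod4 c (dropCoord i v) := by
        refine sum_le_sum fun v _ => ?_
        rw [sum_prod4_inv_dropCoord, ← mul_assoc]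
        exact mul_le_mul_of_nonneg_right (bracketSq_altSum_le v) (prod5_nonneg hc v)
    _ = 5 * ∑ i, ∑ v ∈ altSumFiber S j, prod4 c (dropCoord i v) := by
        rw [← mul_sum, sum_comm]
    _ ≤ 5 * ∑ _i : Fin 5, (∑ m ∈ S, c m) ^ 4 := by
        gcongr with i
        exact sum_altSumFiber_prod4_dropCoord_le S j hc i
    _ = 25 * (∑ m ∈ S, c m) ^ 4 := by
        rw [sum_const, card_univ, Fintype.card_fin, nsmul_eq_mul]
        ring

theorem sum_bracketSq_mul_sq_sum_altSumFiber_le (S : Finset ℤ) (a : ℤ → ℝ) :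
    ∑ j ∈ (S ×ˢ S ×ˢ S ×ˢ S ×ˢ S).image altSum,
        bracketSq j * (∑ v ∈ altSumFiber S j, prod5 a v) ^ 2 ≤
      25 * (∑ m ∈ S, (bracketSq m)⁻¹) ^ 4 * (∑ m ∈ S, bracketSq m * a m ^ 2) ^ 5 := by
  set c : ℤ → ℝ := fun m => (bracketSq m)⁻¹
  set b : ℤ → ℝ := fun m => bracketSq m * a m ^ 2
  have hc : ∀ m, 0 ≤ c m := fun m => (inv_bracketSq_pos m).le
  have hb : ∀ m, 0 ≤ b m := fun m => mul_nonneg (bracketSq_pos m).le (sq_nonneg _)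
  have hcb : ∀ v, prod5 a v ^ 2 = prod5 c v * prod5 b v := fun v => by
    have := bracketSq_pos v.1; have := bracketSq_pos v.2.1; have := bracketSq_pos v.2.2.1
    have := bracketSq_pos v.2.2.2.1; have := bracketSq_pos v.2.2.2.2
    simp only [prod5, c, b]
    field_simp
  calc ∑ j ∈ (S ×ˢ S ×ˢ S ×ˢ S ×ˢ S).image altSum,
        bracketSq j * (∑ v ∈ altSumFiber S j, prod5 a v) ^ 2
      ≤ ∑ j ∈ (S ×ˢ S ×ˢ S ×ˢ S ×ˢ S).image altSum,
          (bracketSq j * ∑ v ∈ altSumFiber S j, prod5 c v) * ∑ v ∈ altSumFiber S j, prod5 b v := by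
        refine sum_le_sum fun j _ => ?_
        rw [mul_assoc]
        refine mul_le_mul_of_nonneg_left ?_ (bracketSq_pos j).le
        exact sum_sq_le_sum_mul_sum_of_sq_le_mul _ (fun v _ => prod5_nonneg hc v)
          (fun v _ => prod5_nonneg hb v) (fun v _ => (hcb v).le)
    _ ≤ ∑ j ∈ (S ×ˢ S ×ˢ S ×ˢ S ×ˢ S).image altSum,
          25 * (∑ m ∈ S, c m) ^ 4 * ∑ v ∈ altSumFiber S j, prod5 b v := by
        exact sum_le_sum fun j _ => mul_le_mul_of_nonneg_right
          (bracketSq_mul_sum_altSumFiber_prod5_inv_le S j) (sum_nonneg fun v _ => prod5_nonneg hb v)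
    _ = 25 * (∑ m ∈ S, c m) ^ 4 * (∑ m ∈ S, b m) ^ 5 := by
        rw [← mul_sum, ← sum_prod5]
        unfold altSumFiber
        rw [sum_fiberwise_of_maps_to fun v hv => mem_image_of_mem altSum hv]

def quinticTerm (u : ℤ → ℂ) (v : ℤ⁵) : ℂ :=
  u v.1 * conj (u v.2.1) * u v.2.2.1 * conj (u v.2.2.2.1) * u v.2.2.2.2

lemma norm_quinticTerm (u : ℤ → ℂ) (v : ℤ⁵) : ‖quinticTerm u v‖ = prod5 (fun m => ‖u m‖) v := by
  simp only [quinticTerm, prod5, norm_mul, Complex.norm_conj]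

lemma quinticTerm_eq_zero {u : ℤ → ℂ} {S : Finset ℤ} (hS : Function.support u ⊆ S) {v : ℤ⁵}
    (hv : v ∉ S ×ˢ S ×ˢ S ×ˢ S ×ˢ S) : quinticTerm u v = 0 := by
  contrapose! hv
  simp only [quinticTerm, ne_eq, mul_eq_zero, map_eq_zero, not_or] at hv
  simp only [mem_product]
  exact ⟨hS hv.1.1.1.1, hS hv.1.1.1.2, hS hv.1.1.2, hS hv.1.2, hS hv.2⟩

lemma norm_tsum_quinticTerm_le {p : ℤ⁵ → Prop} {j : ℤ} (hp : ∀ v, p v → altSum v = j)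
    {u : ℤ → ℂ} {S : Finset ℤ} (hS : Function.support u ⊆ S) :
    ‖∑' v : {v // p v}, quinticTerm u v‖ ≤ ∑ v ∈ altSumFiber S j, prod5 (fun m => ‖u m‖) v := by
  classical
  rw [tsum_eq_sum (s := (S ×ˢ S ×ˢ S ×ˢ S ×ˢ S).subtype p)
    fun v hv => quinticTerm_eq_zero hS (by simpa using hv), sum_subtype_eq_sum_filter]
  calc ‖∑ v ∈ S ×ˢ S ×ˢ S ×ˢ S ×ˢ S with p v, quinticTerm u v‖
      ≤ ∑ v ∈ S ×ˢ S ×ˢ S ×ˢ S ×ˢ S with p v, prod5 (fun m => ‖u m‖) v := by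
        simpa only [norm_quinticTerm] using norm_sum_le _ (quinticTerm u)
    _ ≤ ∑ v ∈ altSumFiber S j, prod5 (fun m => ‖u m‖) v := by
        refine sum_le_sum_of_subset_of_nonneg (fun v hv => ?_)
          fun v _ _ => prod5_nonneg (fun m => norm_nonneg _) v
        rw [mem_filter] at hv
        exact mem_altSumFiber.mpr ⟨hv.1, hp v hv.2⟩

lemma tsum_bracketSq_mul_norm_sq_le {F : ℤ → ℂ} {G : ℤ → ℝ} {J : Finset ℤ}
    (hFG : ∀ j, ‖F j‖ ≤ G j) (hG : ∀ j ∉ J, G j = 0) :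
    ∑' j, bracketSq j * ‖F j‖ ^ 2 ≤ ∑ j ∈ J, bracketSq j * G j ^ 2 := by
  rw [tsum_eq_sum (s := J) fun j hj => by
    simp [norm_le_zero_iff.mp (hG j hj ▸ hFG j)]]
  gcongr with j
  · exact (bracketSq_pos j).le
  · exact hFG j

end QuinticEstimate

open QuinticEstimate

/-- Quintic nonlinear estimate `‖F(u)‖_{h¹} ≲ ‖u‖_{h¹}⁵` for the resonant nonlinearity. -/
theorem quintic_nonlinear_estimate :
    ∃ C : ℝ, 0 < C ∧ ∀ u : ℤ → ℂ, (Function.support u).Finite →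
      Real.sqrt (∑' j : ℤ, (1 + (j : ℝ) ^ 2) *
          ‖∑' v : {v : ℤ × ℤ × ℤ × ℤ × ℤ //
              v.1 - v.2.1 + v.2.2.1 - v.2.2.2.1 + v.2.2.2.2 = j ∧
              v.1 ^ 2 - v.2.1 ^ 2 + v.2.2.1 ^ 2 - v.2.2.2.1 ^ 2 + v.2.2.2.2 ^ 2 = j ^ 2},
            u v.val.1 * conj (u v.val.2.1) * u v.val.2.2.1 *
              conj (u v.val.2.2.2.1) * u v.val.2.2.2.2‖ ^ 2)
        ≤ C * (∑' j : ℤ, (1 + (j : ℝ) ^ 2) * ‖u j‖ ^ 2) ^ ((5 : ℝ) / 2) := by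
  set K := ∑' m : ℤ, (bracketSq m)⁻¹
  have hK : 0 < K := summable_bracketSq_inv.tsum_pos (fun m => (inv_bracketSq_pos m).le)
    0 (inv_bracketSq_pos 0)
  refine ⟨5 * K ^ 2, by positivity, fun u hu => ?_⟩
  set S := hu.toFinset
  have hS : Function.support u ⊆ S := by simp [S]
  have hX : ∑' j : ℤ, (1 + (j : ℝ) ^ 2) * ‖u j‖ ^ 2 = ∑ m ∈ S, bracketSq m * ‖u m‖ ^ 2 :=
    tsum_eq_sum fun m hm => by simp [Function.notMem_support.mp fun h => hm (hS h)]
  have hKS : ∑ m ∈ S, (bracketSq m)⁻¹ ≤ K :=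
    summable_bracketSq_inv.sum_le_tsum S fun m _ => (inv_bracketSq_pos m).le
  have hX0 : 0 ≤ ∑ m ∈ S, bracketSq m * ‖u m‖ ^ 2 :=
    sum_nonneg fun m _ => mul_nonneg (bracketSq_pos m).le (sq_nonneg _)
  refine Real.sqrt_le_iff.mpr ⟨by positivity, ?_⟩
  calc _ ≤ ∑ j ∈ (S ×ˢ S ×ˢ S ×ˢ S ×ˢ S).image altSum,
          bracketSq j * (∑ v ∈ altSumFiber S j, prod5 (fun m => ‖u m‖) v) ^ 2 := by
        exact tsum_bracketSq_mul_norm_sq_le (fun j => norm_tsum_quinticTerm_le (fun v hv => hv.1) hS)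
          fun j hj => by rw [altSumFiber_eq_empty hj, sum_empty]
    _ ≤ 25 * (∑ m ∈ S, (bracketSq m)⁻¹) ^ 4 * (∑ m ∈ S, bracketSq m * ‖u m‖ ^ 2) ^ 5 :=
        sum_bracketSq_mul_sq_sum_altSumFiber_le S _
    _ ≤ 25 * K ^ 4 * (∑ m ∈ S, bracketSq m * ‖u m‖ ^ 2) ^ 5 := by
        gcongr
        exact sum_nonneg fun m _ => (inv_bracketSq_pos m).le
    _ = _ := by
        rw [hX, mul_pow, ← Real.rpow_mul_natCast hX0,
          show (5 : ℝ) / 2 * (2 : ℕ) = (5 : ℕ) by norm_num, Real.rpow_natCast]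
        ring
end

section
/- Let β > 3/8 and C(P,R) ⊂ ℝ denote, for integers p₁,p₂,p₄,j, the at-most-two-element set of integers p₃ satisfying the quadratic resonance (with p₅ := p₂+p₄+j−p₁−p₃, the tuple lies in R(j)). Then there is a constant C = C(β) such that for all j ∈ ℤ: ⟨j⟩² · Σ over (p₁,p₂,p₃,p₄,p₅) ∈ R(j) with |p₅| ≥ max(|p₁|,|p₂|,|p₃|,|p₄|,|j|) of ⟨p₁⟩^{−2β}⟨p₂⟩^{−2β}⟨p₃⟩^{−2β}⟨p₄⟩^{−2β}⟨p₅⟩^{−2} ≤ C. -/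
/-!
Since `|j| ≤ |p₅|`, the factor `⟨j⟩²⟨p₅⟩⁻²` is at most `1`. Let `p_k` be the entry of largest
absolute value among `p₁, …, p₄` and `a, b, c` the other three. Then
`⟨p_k⟩^{-2β} ≤ (⟨a⟩⟨b⟩⟨c⟩)^{-2β/3}`, so the summand is at most `(⟨a⟩⟨b⟩⟨c⟩)^{-8β/3}`, which is
summable over `ℤ³` because `8β/3 > 1`. Given `j, a, b, c`, the resonance leaves at most two
values of `p_k`: for `k = 1, 3` the pair `(p_k, p₅)` has known sum and sum of squares, and for
`k = 2, 4` both `p₅ - p_k` and `p₅² - p_k²` are known, which determines `p_k` unless `p₅ = p_k`.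
In that degenerate case the resonance forces `{p₁, p₃} = {j, p₄}` (resp. `{j, p₂}`), the tuple is
determined by two entries, and `⟨j⟩^{2-2β} ≤ ⟨p₅⟩^{2-2β}` pays for the repeated one; this needs
`β ≤ 1`, to which the monotonicity of the summand in `β` reduces.
Tagging the at most two preimages turns this into an injection of the index set into a finite set
times `ℤ³`, along which the summands are dominated by a summable weight independent of `j`.
-/

open Real

section PairDetermination

variable {R : Type*} [CommRing R] [IsDomain R] [NeZero (2 : R)]

theorem eq_or_swap_of_add_eq_of_sq_add_sq_eq {x y a b : R} (h : x + y = a + b)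
    (hsq : x ^ 2 + y ^ 2 = a ^ 2 + b ^ 2) : x = a ∧ y = b ∨ x = b ∧ y = a := by
  have hy : y = a + b - x := eq_sub_of_add_eq' h
  subst hy
  have : 2 * ((x - a) * (x - b)) = 0 := by linear_combination hsq
  rcases mul_eq_zero.1 ((mul_eq_zero.1 this).resolve_left two_ne_zero) with hxa | hxb
  · exact .inl ⟨by linear_combination hxa, by linear_combination -hxa⟩
  · exact .inr ⟨by linear_combination hxb, by linear_combination -hxb⟩

theorem eq_and_eq_of_sub_eq_of_sq_sub_sq_eq {a b a' b' : R} (h : a - b = a' - b')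
    (hsq : a ^ 2 - b ^ 2 = a' ^ 2 - b' ^ 2) (hab : a ≠ b) : a = a' ∧ b = b' := by
  have hsum : a + b - (a' + b') = 0 := by
    refine (mul_eq_zero.1 ?_).resolve_left (sub_ne_zero.2 hab)
    linear_combination hsq - (a' + b') * h
  have h2a : 2 * (a - a') = 0 := by linear_combination hsum + h
  have ha : a = a' := sub_eq_zero.1 ((mul_eq_zero.1 h2a).resolve_left two_ne_zero)
  exact ⟨ha, by linear_combination ha - h⟩

end PairDetermination

def IsResonant (j : ℤ) (p : ℤ × ℤ × ℤ × ℤ × ℤ) : Prop :=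
  p.1 - p.2.1 + p.2.2.1 - p.2.2.2.1 + p.2.2.2.2 = j ∧
    p.1 ^ 2 - p.2.1 ^ 2 + p.2.2.1 ^ 2 - p.2.2.2.1 ^ 2 + p.2.2.2.2 ^ 2 = j ^ 2

theorem IsResonant.eq_and_eq_or_of_fifth_eq_second {j p₁ p₂ p₃ p₄ : ℤ}
    (h : IsResonant j (p₁, p₂, p₃, p₄, p₂)) : p₁ = j ∧ p₃ = p₄ ∨ p₁ = p₄ ∧ p₃ = j :=
  eq_or_swap_of_add_eq_of_sq_add_sq_eq (by linear_combination h.1) (by linear_combination h.2)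

theorem IsResonant.eq_and_eq_or_of_fifth_eq_fourth {j p₁ p₂ p₃ p₄ : ℤ}
    (h : IsResonant j (p₁, p₂, p₃, p₄, p₄)) : p₁ = j ∧ p₃ = p₂ ∨ p₁ = p₂ ∧ p₃ = j :=
  eq_or_swap_of_add_eq_of_sq_add_sq_eq (by linear_combination h.1) (by linear_combination h.2)

/-- Tags `0, 1` are the degenerate tuples `p₅ = p₂`, `p₅ = p₄`; tag `k + 1` keeps all entries
but `p_k`, the largest of `p₁, …, p₄` in absolute value. The bit selects one of the two
candidates left by the resonance. -/
def encode (j : ℤ) : ℤ × ℤ × ℤ × ℤ × ℤ → (Fin 6 × Bool) × ℤ × ℤ × ℤ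
  | (p₁, p₂, p₃, p₄, p₅) =>
    if p₅ = p₂ then ((0, decide (p₁ = j)), p₂, p₄, 0)
    else if p₅ = p₄ then ((1, decide (p₁ = j)), p₄, p₂, 0)
    else if |p₂| ≤ |p₁| ∧ |p₃| ≤ |p₁| ∧ |p₄| ≤ |p₁| then ((2, decide (p₁ ≤ p₅)), p₂, p₃, p₄)
    else if |p₃| ≤ |p₂| ∧ |p₄| ≤ |p₂| then ((3, false), p₁, p₃, p₄)
    else if |p₄| ≤ |p₃| then ((4, decide (p₃ ≤ p₅)), p₁, p₂, p₄)
    else ((5, false), p₁, p₂, p₃)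

def CodeSpec (j : ℤ) : ℤ × ℤ × ℤ × ℤ × ℤ → (Fin 6 × Bool) × ℤ × ℤ × ℤ → Prop
  | (p₁, p₂, _, p₄, p₅), ((0, b), x, y, _) => p₅ = p₂ ∧ p₂ = x ∧ p₄ = y ∧ b = decide (p₁ = j)
  | (p₁, p₂, _, p₄, p₅), ((1, b), x, y, _) => p₅ = p₄ ∧ p₄ = x ∧ p₂ = y ∧ b = decide (p₁ = j)
  | (p₁, p₂, p₃, p₄, p₅), ((2, b), x, y, z) => p₂ = x ∧ p₃ = y ∧ p₄ = z ∧ b = decide (p₁ ≤ p₅)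
  | (p₁, p₂, p₃, p₄, p₅), ((3, _), x, y, z) => p₁ = x ∧ p₃ = y ∧ p₄ = z ∧ p₅ ≠ p₂
  | (p₁, p₂, p₃, p₄, p₅), ((4, b), x, y, z) => p₁ = x ∧ p₂ = y ∧ p₄ = z ∧ b = decide (p₃ ≤ p₅)
  | (p₁, p₂, p₃, p₄, p₅), ((5, _), x, y, z) => p₁ = x ∧ p₂ = y ∧ p₃ = z ∧ p₅ ≠ p₄

theorem codeSpec_encode (j : ℤ) (p : ℤ × ℤ × ℤ × ℤ × ℤ) : CodeSpec j p (encode j p) := by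
  obtain ⟨p₁, p₂, p₃, p₄, p₅⟩ := p
  simp only [encode]
  split_ifs <;> simp [CodeSpec, *]

theorem IsResonant.eq_of_codeSpec {j : ℤ} {p p' : ℤ × ℤ × ℤ × ℤ × ℤ}
    {q : (Fin 6 × Bool) × ℤ × ℤ × ℤ} (hp : IsResonant j p) (hp' : IsResonant j p')
    (hq : CodeSpec j p q) (hq' : CodeSpec j p' q) : p = p' := by
  obtain ⟨p₁, p₂, p₃, p₄, p₅⟩ := p
  obtain ⟨r₁, r₂, r₃, r₄, r₅⟩ := p'
  obtain ⟨⟨k, b⟩, x, y, z⟩ := q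
  simp only [Prod.mk.injEq]
  fin_cases k <;> simp only [CodeSpec] at hq hq'
  · obtain ⟨rfl, rfl, rfl, hb⟩ := hq
    obtain ⟨rfl, rfl, rfl, hb'⟩ := hq'
    have hpat := hp.eq_and_eq_or_of_fifth_eq_second
    have hpat' := hp'.eq_and_eq_or_of_fifth_eq_second
    have hbit : p₁ = j ↔ r₁ = j := by rw [← decide_eq_decide, ← hb, hb']
    omega
  · obtain ⟨rfl, rfl, rfl, hb⟩ := hq
    obtain ⟨rfl, rfl, rfl, hb'⟩ := hq'
    have hpat := hp.eq_and_eq_or_of_fifth_eq_fourth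
    have hpat' := hp'.eq_and_eq_or_of_fifth_eq_fourth
    have hbit : p₁ = j ↔ r₁ = j := by rw [← decide_eq_decide, ← hb, hb']
    omega
  · obtain ⟨rfl, rfl, rfl, hb⟩ := hq
    obtain ⟨rfl, rfl, rfl, hb'⟩ := hq'
    have hpair := eq_or_swap_of_add_eq_of_sq_add_sq_eq (x := p₁) (y := p₅) (a := r₁) (b := r₅)
      (by linear_combination hp.1 - hp'.1) (by linear_combination hp.2 - hp'.2)
    have hbit : p₁ ≤ p₅ ↔ r₁ ≤ r₅ := by rw [← decide_eq_decide, ← hb, hb']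
    omega
  · obtain ⟨rfl, rfl, rfl, h₅⟩ := hq
    obtain ⟨rfl, rfl, rfl, -⟩ := hq'
    have hpair := eq_and_eq_of_sub_eq_of_sq_sub_sq_eq (a := p₅) (b := p₂) (a' := r₅) (b' := r₂)
      (by linear_combination hp.1 - hp'.1) (by linear_combination hp.2 - hp'.2) h₅
    omega
  · obtain ⟨rfl, rfl, rfl, hb⟩ := hq
    obtain ⟨rfl, rfl, rfl, hb'⟩ := hq'
    have hpair := eq_or_swap_of_add_eq_of_sq_add_sq_eq (x := p₃) (y := p₅) (a := r₃) (b := r₅)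
      (by linear_combination hp.1 - hp'.1) (by linear_combination hp.2 - hp'.2)
    have hbit : p₃ ≤ p₅ ↔ r₃ ≤ r₅ := by rw [← decide_eq_decide, ← hb, hb']
    omega
  · obtain ⟨rfl, rfl, rfl, h₅⟩ := hq
    obtain ⟨rfl, rfl, rfl, -⟩ := hq'
    have hpair := eq_and_eq_of_sub_eq_of_sq_sub_sq_eq (a := p₅) (b := p₄) (a' := r₅) (b' := r₄)
      (by linear_combination hp.1 - hp'.1) (by linear_combination hp.2 - hp'.2) h₅
    omega

theorem injOn_encode (j : ℤ) : Set.InjOn (encode j) {p | IsResonant j p} :=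
  fun p hp p' hp' h ↦ hp.eq_of_codeSpec hp' (codeSpec_encode j p) (h ▸ codeSpec_encode j p')

section Decay

/-- `decay s n = ⟨n⟩^{-2s}`. -/
noncomputable def decay (s : ℝ) (n : ℤ) : ℝ := (1 + (n : ℝ) ^ 2) ^ (-s)

variable {s s' : ℝ} {m n : ℤ}

theorem one_le_one_add_sq (n : ℤ) : (1 : ℝ) ≤ 1 + (n : ℝ) ^ 2 :=
  le_add_of_nonneg_right (sq_nonneg _)

theorem one_add_sq_le_one_add_sq (h : |m| ≤ |n|) : (1 : ℝ) + (m : ℝ) ^ 2 ≤ 1 + (n : ℝ) ^ 2 := by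
  have : (m : ℝ) ^ 2 ≤ (n : ℝ) ^ 2 := sq_le_sq.2 (by exact_mod_cast h)
  linarith

theorem decay_pos (s : ℝ) (n : ℤ) : 0 < decay s n :=
  rpow_pos_of_pos (by positivity) _

theorem decay_zero (s : ℝ) : decay s 0 = 1 := by
  simp [decay]

theorem decay_le_one (hs : 0 ≤ s) (n : ℤ) : decay s n ≤ 1 :=
  rpow_le_one_of_one_le_of_nonpos (one_le_one_add_sq n) (neg_nonpos.2 hs)

theorem decay_le_decay_of_abs_le (hs : 0 ≤ s) (h : |m| ≤ |n|) : decay s n ≤ decay s m :=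
  rpow_le_rpow_of_nonpos (by positivity) (one_add_sq_le_one_add_sq h) (neg_nonpos.2 hs)

theorem decay_pow (s : ℝ) (n : ℤ) (k : ℕ) : decay s n ^ k = decay (k * s) n := by
  rw [decay, decay, ← rpow_natCast, ← rpow_mul (by positivity), neg_mul, mul_comm]

theorem one_add_sq_mul_decay_le (hs : s ≤ 1) (h : |m| ≤ |n|) :
    (1 + (m : ℝ) ^ 2) * decay s m ≤ (1 + (n : ℝ) ^ 2) * decay s n := by
  have key (k : ℤ) : (1 + (k : ℝ) ^ 2) * decay s k = (1 + (k : ℝ) ^ 2) ^ (1 - s) := by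
    rw [decay, sub_eq_add_neg, rpow_add (by positivity), rpow_one]
  rw [key, key]
  exact rpow_le_rpow (by positivity) (one_add_sq_le_one_add_sq h) (by linarith)

theorem summable_decay (hs : 1 / 2 < s) : Summable (decay s) := by
  refine (summable_abs_int_rpow (b := 2 * s) (by linarith)).of_norm_bounded_eventually ?_
  filter_upwards [Filter.eventually_cofinite_ne 0] with n hn
  have hn : (0 : ℝ) < (n : ℝ) ^ 2 := by positivity
  calc ‖decay s n‖ = decay s n := Real.norm_of_nonneg (decay_pos s n).le
    _ ≤ ((n : ℝ) ^ 2) ^ (-s) := rpow_le_rpow_of_nonpos hn (by linarith) (by linarith)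
    _ = |(n : ℝ)| ^ (-(2 * s)) := by
      rw [← sq_abs, ← rpow_natCast, ← rpow_mul (abs_nonneg _)]; norm_num

noncomputable def codeWeight (s : ℝ) (q : (Fin 6 × Bool) × ℤ × ℤ × ℤ) : ℝ :=
  decay s q.2.1 * (decay s q.2.2.1 * decay s q.2.2.2)

theorem codeWeight_pos (s : ℝ) (q : (Fin 6 × Bool) × ℤ × ℤ × ℤ) : 0 < codeWeight s q := by
  unfold codeWeight decay
  positivity

theorem summable_codeWeight (hs : 1 / 2 < s) : Summable (codeWeight s) := by
  have h := summable_decay hs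
  have h0 : 0 ≤ decay s := fun n ↦ (decay_pos s n).le
  have h3 := h.mul_of_nonneg (h.mul_of_nonneg h h0 h0) h0 fun _ ↦ mul_nonneg (h0 _) (h0 _)
  exact ((Summable.of_finite (f := fun _ : Fin 6 × Bool ↦ (1 : ℝ))).mul_of_nonneg h3
    (fun _ ↦ zero_le_one) fun _ ↦ mul_nonneg (h0 _) (mul_nonneg (h0 _) (h0 _))).congr
    fun q ↦ one_mul _

noncomputable def resonantWeight (s : ℝ) (p : ℤ × ℤ × ℤ × ℤ × ℤ) : ℝ :=
  decay s p.1 * decay s p.2.1 * decay s p.2.2.1 * decay s p.2.2.2.1 *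
    (1 + (p.2.2.2.2 : ℝ) ^ 2)⁻¹

theorem resonantWeight_le_of_le (h : s ≤ s') (p : ℤ × ℤ × ℤ × ℤ × ℤ) :
    resonantWeight s' p ≤ resonantWeight s p := by
  unfold resonantWeight decay
  gcongr <;> exact one_le_one_add_sq _

end Decay

theorem mul_cubes_mul_inv_le_of_le_of_le_of_le {J P a b c d : ℝ} (hJ : 0 ≤ J) (hJP : J ≤ P)
    (ha : 0 ≤ a) (hab : a ≤ b) (hac : a ≤ c) (had : a ≤ d) :
    J * (a ^ 3 * b ^ 3 * c ^ 3 * d ^ 3 * P⁻¹) ≤ b ^ 4 * (c ^ 4 * d ^ 4) := by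
  have hb : 0 ≤ b := ha.trans hab
  have hc : 0 ≤ c := ha.trans hac
  have hd : 0 ≤ d := ha.trans had
  have hJP' : J * P⁻¹ ≤ 1 := by
    rw [← div_eq_mul_inv]
    exact div_le_one_of_le₀ hJP (hJ.trans hJP)
  have ha3 : a ^ 3 ≤ b * c * d := by
    calc a ^ 3 = a * a * a := by ring
      _ ≤ b * c * d := by gcongr
  calc J * (a ^ 3 * b ^ 3 * c ^ 3 * d ^ 3 * P⁻¹)
      = J * P⁻¹ * a ^ 3 * (b ^ 3 * c ^ 3 * d ^ 3) := by ring
    _ ≤ 1 * (b * c * d) * (b ^ 3 * c ^ 3 * d ^ 3) := by gcongr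
    _ = b ^ 4 * (c ^ 4 * d ^ 4) := by ring

theorem mul_cubes_mul_inv_le_of_mul_cube_le {J A x a b : ℝ} (hA : 0 < A)
    (hJ : J * x ^ 3 ≤ A * a ^ 3) (ha : 0 ≤ a) (ha1 : a ≤ 1) (hb : 0 ≤ b) (hb1 : b ≤ 1) :
    J * (x ^ 3 * a ^ 3 * b ^ 3 * b ^ 3 * A⁻¹) ≤ a ^ 4 * b ^ 4 := by
  calc J * (x ^ 3 * a ^ 3 * b ^ 3 * b ^ 3 * A⁻¹) = J * x ^ 3 * A⁻¹ * (a ^ 3 * b ^ 6) := by ring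
    _ ≤ A * a ^ 3 * A⁻¹ * (a ^ 3 * b ^ 6) := by gcongr
    _ = a ^ 6 * b ^ 6 := by field_simp
    _ ≤ a ^ 4 * b ^ 4 := mul_le_mul (pow_le_pow_of_le_one ha ha1 (by norm_num))
      (pow_le_pow_of_le_one hb hb1 (by norm_num)) (by positivity) (by positivity)

theorem mul_resonantWeight_le_codeWeight_encode {t : ℝ} (ht : 0 ≤ t) (ht' : t ≤ 1 / 3) {j : ℤ}
    {p : ℤ × ℤ × ℤ × ℤ × ℤ} (hp : IsResonant j p) (hj : |j| ≤ |p.2.2.2.2|) :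
    (1 + (j : ℝ) ^ 2) * resonantWeight (3 * t) p ≤ codeWeight (4 * t) (encode j p) := by
  obtain ⟨p₁, p₂, p₃, p₄, p₅⟩ := p
  simp only at hj
  have hu3 (n : ℤ) : decay (3 * t) n = decay t n ^ 3 := by rw [decay_pow]; norm_num
  have hu4 (n : ℤ) : decay (4 * t) n = decay t n ^ 4 := by rw [decay_pow]; norm_num
  have hu0 (n : ℤ) : 0 ≤ decay t n := (decay_pos t n).le
  have hu1 (n : ℤ) : decay t n ≤ 1 := decay_le_one ht n
  have hanti (m n : ℤ) (h : |m| ≤ |n|) : decay t n ≤ decay t m := decay_le_decay_of_abs_le ht h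
  have hJ : (1 + (j : ℝ) ^ 2) * decay t j ^ 3 ≤ (1 + (p₅ : ℝ) ^ 2) * decay t p₅ ^ 3 := by
    simpa only [hu3] using one_add_sq_mul_decay_le (s := 3 * t) (by linarith) hj
  have hJP := one_add_sq_le_one_add_sq hj
  have hP : (0 : ℝ) < 1 + (p₅ : ℝ) ^ 2 := by positivity
  simp only [resonantWeight, encode, hu3]
  split_ifs with h₅₂ h₅₄ h₁ h₂ h₃ <;> simp only [codeWeight, hu4, decay_zero]
  · rw [h₅₂] at hp hJ hP ⊢
    rcases hp.eq_and_eq_or_of_fifth_eq_second with ⟨h₁, h₃⟩ | ⟨h₁, h₃⟩ <;> rw [h₁, h₃] <;>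
      linear_combination
        mul_cubes_mul_inv_le_of_mul_cube_le hP hJ (hu0 p₂) (hu1 p₂) (hu0 p₄) (hu1 p₄)
  · rw [h₅₄] at hp hJ hP ⊢
    rcases hp.eq_and_eq_or_of_fifth_eq_fourth with ⟨h₁, h₃⟩ | ⟨h₁, h₃⟩ <;> rw [h₁, h₃] <;>
      linear_combination
        mul_cubes_mul_inv_le_of_mul_cube_le hP hJ (hu0 p₄) (hu1 p₄) (hu0 p₂) (hu1 p₂)
  · linear_combination mul_cubes_mul_inv_le_of_le_of_le_of_le (by positivity) hJP (hu0 p₁)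
      (hanti _ _ h₁.1) (hanti _ _ h₁.2.1) (hanti _ _ h₁.2.2)
  · linear_combination mul_cubes_mul_inv_le_of_le_of_le_of_le (by positivity) hJP (hu0 p₂)
      (hanti p₁ p₂ (by omega)) (hanti _ _ h₂.1) (hanti _ _ h₂.2)
  · linear_combination mul_cubes_mul_inv_le_of_le_of_le_of_le (by positivity) hJP (hu0 p₃)
      (hanti p₁ p₃ (by omega)) (hanti p₂ p₃ (by omega)) (hanti _ _ h₃)
  · linear_combination mul_cubes_mul_inv_le_of_le_of_le_of_le (by positivity) hJP (hu0 p₄)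
      (hanti p₁ p₄ (by omega)) (hanti p₂ p₄ (by omega)) (hanti p₃ p₄ (by omega))

theorem tsum_le_tsum_of_le_comp_injective {α β : Type*} {f : α → ℝ} {g : β → ℝ} {e : α → β}
    (he : Function.Injective e) (hf : 0 ≤ f) (hg : Summable g) (hg0 : 0 ≤ g)
    (hfg : ∀ a, f a ≤ g (e a)) : ∑' a, f a ≤ ∑' b, g b :=
  (Summable.of_nonneg_of_le hf hfg (hg.comp_injective he)).tsum_le_tsum_of_inj e he
    (fun b _ ↦ hg0 b) hfg hg

/-- Weighted resonant counting bound with exponent `2β`, `β > 3/8`, restricted to tuples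
whose last entry dominates. -/
theorem weighted_resonant_counting (β : ℝ) (hβ : 3 / 8 < β) :
    ∃ C : ℝ, 0 < C ∧ ∀ j : ℤ,
      (1 + (j : ℝ) ^ 2) *
        ∑' v : {v : ℤ × ℤ × ℤ × ℤ × ℤ //
            (v.1 - v.2.1 + v.2.2.1 - v.2.2.2.1 + v.2.2.2.2 = j ∧
             v.1 ^ 2 - v.2.1 ^ 2 + v.2.2.1 ^ 2 - v.2.2.2.1 ^ 2 + v.2.2.2.2 ^ 2 = j ^ 2) ∧
            max (max (max (max |v.1| |v.2.1|) |v.2.2.1|) |v.2.2.2.1|) |j| ≤ |v.2.2.2.2|},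
          ((1 + (v.val.1 : ℝ) ^ 2) ^ (-β) * (1 + (v.val.2.1 : ℝ) ^ 2) ^ (-β) *
           (1 + (v.val.2.2.1 : ℝ) ^ 2) ^ (-β) * (1 + (v.val.2.2.2.1 : ℝ) ^ 2) ^ (-β) *
           (1 + (v.val.2.2.2.2 : ℝ) ^ 2)⁻¹)
        ≤ C := by
  obtain ⟨t, ht, ht', h3t⟩ : ∃ t : ℝ, 1 / 8 < t ∧ t ≤ 1 / 3 ∧ 3 * t ≤ β :=
    ⟨min β 1 / 3, by linarith [lt_min hβ (by norm_num : (3 / 8 : ℝ) < 1)],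
      by linarith [min_le_right β 1], by linarith [min_le_left β 1]⟩
  have hg := summable_codeWeight (s := 4 * t) (by linarith)
  refine ⟨∑' q, codeWeight (4 * t) q,
    hg.tsum_pos (fun q ↦ (codeWeight_pos _ q).le) ((0, false), 0, 0, 0) (codeWeight_pos _ _),
    fun j ↦ ?_⟩
  rw [← tsum_mul_left]
  refine tsum_le_tsum_of_le_comp_injective (e := fun v ↦ encode j v.1)
    (fun v w h ↦ Subtype.ext (injOn_encode j v.2.1 w.2.1 h)) (fun v ↦ by positivity) hg
    (fun q ↦ (codeWeight_pos _ q).le) fun v ↦ ?_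
  calc (1 + (j : ℝ) ^ 2) * resonantWeight β v.1
      ≤ (1 + (j : ℝ) ^ 2) * resonantWeight (3 * t) v.1 := by
        gcongr
        exact resonantWeight_le_of_le h3t v.1
    _ ≤ codeWeight (4 * t) (encode j v.1) :=
        mul_resonantWeight_le_codeWeight_encode (by linarith) ht' v.2.1
          ((le_max_right _ _).trans v.2.2)
end
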